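/- arXiv:2501.08227 — 5 statements merged into one kernel-verified Lean document; each statement's English description precedes it below -/
import Mathlib

section
/- Let σ be a class-KL function (continuous, increasing in first argument with σ(0,t)=0, and non-increasing in second argument with limit 0 as t→∞). Then there exist class-K∞ functions a₁, a₂ such that σ(s,t) ≤ a₁(exp(−t)·a₂(s)) for all s,t ≥ 0. -/
/-!
Pick times `τ n`, monotone in `n`, after which `σ (n + 1)` is below `1 / (n + 1)`, and take
`a₂ s ≥ s * exp (τ ⌊s⌋₊)`. Then `y = log (exp (-t) * a₂ s) ≥ log s + τ ⌊s⌋₊ - t`, and `σ s t`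
is bounded by `envelope σ τ y`, a monotone function of `y` tending to `0` as `y → -∞`; so any
`K∞` majorant `a₁` of `envelope σ τ ∘ log` works. `K∞` majorants of monotone functions vanishing
at `0⁺` come from piecewise-linear interpolation on a logarithmic grid.
-/

def ClassK (a : ℝ → ℝ) : Prop :=
  ContinuousOn a (Set.Ici 0) ∧ StrictMonoOn a (Set.Ici 0) ∧ a 0 = 0

def ClassKInf (a : ℝ → ℝ) : Prop :=
  ClassK a ∧ Filter.Tendsto a Filter.atTop Filter.atTop

def ClassKL (σ : ℝ → ℝ → ℝ) : Prop :=
  ContinuousOn (fun p : ℝ × ℝ => σ p.1 p.2) (Set.Ici 0 ×ˢ Set.Ici 0) ∧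
  (∀ t ≥ (0:ℝ), StrictMonoOn (fun s => σ s t) (Set.Ici 0) ∧ σ 0 t = 0) ∧
  (∀ s ≥ (0:ℝ), AntitoneOn (fun t => σ s t) (Set.Ici 0) ∧
    Filter.Tendsto (fun t => σ s t) Filter.atTop (nhds 0))

open Filter Real Set Topology

noncomputable def piecewiseLinear (u : ℤ → ℝ) (y : ℝ) : ℝ :=
  u ⌊y⌋ + Int.fract y * (u (⌊y⌋ + 1) - u ⌊y⌋)

section piecewiseLinear

variable {u : ℤ → ℝ}

theorem apply_floor_le_piecewiseLinear (hu : Monotone u) (y : ℝ) :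
    u ⌊y⌋ ≤ piecewiseLinear u y :=
  le_add_of_nonneg_right <|
    mul_nonneg (Int.fract_nonneg y) (sub_nonneg.2 (hu (Int.le_add_one le_rfl)))

theorem piecewiseLinear_le_apply_floor_add_one (hu : Monotone u) (y : ℝ) :
    piecewiseLinear u y ≤ u (⌊y⌋ + 1) := by
  have h : Int.fract y * (u (⌊y⌋ + 1) - u ⌊y⌋) ≤ u (⌊y⌋ + 1) - u ⌊y⌋ :=
    mul_le_of_le_one_left (sub_nonneg.2 (hu (Int.le_add_one le_rfl))) (Int.fract_lt_one y).le
  unfold piecewiseLinear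
  linarith

theorem Monotone.piecewiseLinear (hu : Monotone u) : Monotone (piecewiseLinear u) := by
  intro a b hab
  rcases (Int.floor_le_floor hab).eq_or_lt with h | h
  · have hfract : Int.fract a ≤ Int.fract b := by
      rw [Int.fract, Int.fract, h]; linarith
    unfold _root_.piecewiseLinear
    rw [h]
    gcongr
    exact sub_nonneg.2 (hu (Int.le_add_one le_rfl))
  · calc _root_.piecewiseLinear u a ≤ u (⌊a⌋ + 1) := piecewiseLinear_le_apply_floor_add_one hu a
      _ ≤ u ⌊b⌋ := hu h
      _ ≤ _root_.piecewiseLinear u b := apply_floor_le_piecewiseLinear hu b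

/-- A formula on `(n - 1, n + 1)` that is visibly continuous. -/
theorem piecewiseLinear_eq_of_mem_Ioo {n : ℤ} {z : ℝ} (hz : z ∈ Ioo ((n : ℝ) - 1) (n + 1)) :
    piecewiseLinear u z =
      u n + min (z - n) 0 * (u n - u (n - 1)) + max (z - n) 0 * (u (n + 1) - u n) := by
  rcases lt_or_ge z n with h | h
  · have hfloor : ⌊z⌋ = n - 1 :=
      Int.floor_eq_iff.2 ⟨by push_cast; linarith [hz.1], by push_cast; linarith⟩
    rw [piecewiseLinear, Int.fract, hfloor, min_eq_left (by linarith), max_eq_right (by linarith),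
      sub_add_cancel]
    push_cast
    ring
  · have hfloor : ⌊z⌋ = n := Int.floor_eq_iff.2 ⟨h, hz.2⟩
    rw [piecewiseLinear, Int.fract, hfloor, min_eq_right (by linarith), max_eq_left (by linarith)]
    ring

theorem continuous_piecewiseLinear : Continuous (piecewiseLinear u) := by
  refine continuous_iff_continuousAt.2 fun y => ?_
  set n := ⌊y⌋
  have hy : y ∈ Ioo ((n : ℝ) - 1) (n + 1) :=
    ⟨by linarith [Int.floor_le y], Int.lt_floor_add_one y⟩
  have hformula : ContinuousAt (fun z : ℝ =>
      u n + min (z - n) 0 * (u n - u (n - 1)) + max (z - n) 0 * (u (n + 1) - u n)) y := by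
    fun_prop
  refine hformula.congr ?_
  filter_upwards [Ioo_mem_nhds hy.1 hy.2] with z hz using (piecewiseLinear_eq_of_mem_Ioo hz).symm

theorem tendsto_piecewiseLinear_atBot (hu : Monotone u) (h : Tendsto u atBot (𝓝 0)) :
    Tendsto (piecewiseLinear u) atBot (𝓝 0) :=
  tendsto_of_tendsto_of_tendsto_of_le_of_le (h.comp tendsto_floor_atBot)
    (h.comp (tendsto_atBot_add_const_right _ 1 tendsto_floor_atBot))
    (apply_floor_le_piecewiseLinear hu) (piecewiseLinear_le_apply_floor_add_one hu)

end piecewiseLinear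

theorem exists_classKInf_ge {M : ℝ → ℝ} (hM : MonotoneOn M (Ioi 0))
    (hM0 : Tendsto M (𝓝[>] 0) (𝓝 0)) : ∃ a, ClassKInf a ∧ ∀ x > 0, M x ≤ a x := by
  have M_nonneg : ∀ x > 0, 0 ≤ M x := fun x hx =>
    le_of_tendsto hM0 <| mem_of_superset (Ioo_mem_nhdsGT hx) fun y hy =>
      hM hy.1 hx hy.2.le
  set u : ℤ → ℝ := fun k => M (exp (k + 1))
  have hu : Monotone u := fun k l hkl =>
    hM (exp_pos _) (exp_pos _) (exp_le_exp.2 (by gcongr))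
  have hu0 : Tendsto u atBot (𝓝 0) :=
    hM0.comp <| tendsto_exp_atBot_nhdsGT.comp <|
      tendsto_atBot_add_const_right _ 1 (tendsto_intCast_atBot_iff.2 tendsto_id)
  set E := Function.update (piecewiseLinear u ∘ log) 0 0
  have u_nonneg : ∀ k, 0 ≤ u k := fun k => M_nonneg _ (exp_pos _)
  have E_nonneg : ∀ x, 0 ≤ E x := by
    intro x
    rcases eq_or_ne x 0 with rfl | hx
    · simp [E]
    · simpa [E, hx] using (u_nonneg _).trans (apply_floor_le_piecewiseLinear hu (log x))
  have E_continuous : Continuous E := by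
    refine continuous_iff_continuousAt.2 fun x => ?_
    rcases eq_or_ne x 0 with rfl | hx
    · exact continuousAt_update_same.2 <|
        (tendsto_piecewiseLinear_atBot hu hu0).comp tendsto_log_nhdsNE_zero
    · exact (continuousAt_update_of_ne hx).2 <|
        continuous_piecewiseLinear.continuousAt.comp (continuousAt_log hx)
  have E_mono : MonotoneOn E (Ici 0) := by
    intro x hx y _ hxy
    rcases (mem_Ici.1 hx).eq_or_lt with rfl | hx
    · simpa [E] using E_nonneg y
    · simpa [E, hx.ne', (hx.trans_le hxy).ne'] using
        Monotone.piecewiseLinear hu (log_le_log hx hxy)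
  refine ⟨fun x => x + E x, ⟨⟨(continuous_id.add E_continuous).continuousOn,
    fun x hx y hy hxy => add_lt_add_of_lt_of_le hxy (E_mono hx hy hxy.le), by simp [E]⟩,
    tendsto_atTop_mono (fun x => le_add_of_nonneg_right (E_nonneg x)) tendsto_id⟩,
    fun x hx => ?_⟩
  have hx_le : x ≤ exp (⌊log x⌋ + 1) := by
    calc x = exp (log x) := (exp_log hx).symm
      _ ≤ exp (⌊log x⌋ + 1) := exp_le_exp.2 (Int.lt_floor_add_one _).le
  calc M x ≤ u ⌊log x⌋ := hM hx (exp_pos _) hx_le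
    _ ≤ piecewiseLinear u (log x) := apply_floor_le_piecewiseLinear hu _
    _ = E x := by simp [E, hx.ne']
    _ ≤ x + E x := le_add_of_nonneg_left hx.le

theorem exists_classKInf_ge_comp_log {v : ℝ → ℝ} (hv : Monotone v)
    (hv0 : Tendsto v atBot (𝓝 0)) : ∃ a, ClassKInf a ∧ ∀ x > 0, v (log x) ≤ a x :=
  exists_classKInf_ge (fun _ hx _ _ hxy => hv (log_le_log hx hxy))
    (hv0.comp tendsto_log_nhdsGT_zero)

theorem exists_classKInf_mul_exp_ge {τ : ℕ → ℝ} (hτ : Monotone τ) :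
    ∃ a, ClassKInf a ∧ ∀ s > 0, s * exp (τ ⌊s⌋₊) ≤ a s := by
  refine exists_classKInf_ge (fun s hs r hr hsr => ?_) ?_
  · exact mul_le_mul hsr (exp_le_exp.2 (hτ (Nat.floor_le_floor hsr))) (exp_pos _).le
      (le_of_lt hr)
  · have h : Tendsto (fun s : ℝ => s * exp (τ 0)) (𝓝[>] 0) (𝓝 0) := by
      simpa using ((tendsto_id (x := 𝓝 (0 : ℝ))).mono_left nhdsWithin_le_nhds).mul_const
        (exp (τ 0))
    refine h.congr' <| mem_of_superset (Ioo_mem_nhdsGT one_pos) fun s hs => ?_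
    simp [Nat.floor_eq_zero.2 hs.2]

theorem tendsto_iSup_nhds_zero {α : Type*} {l : Filter α} {f : ℕ → α → ℝ} {ε : ℕ → ℝ}
    (hf : ∀ j, Tendsto (f j) l (𝓝 0)) (hε : Tendsto ε atTop (𝓝 0))
    (hf_nonneg : ∀ j x, 0 ≤ f j x) (hf_le : ∀ᶠ x in l, ∀ j, f j x ≤ ε j) :
    Tendsto (fun x => ⨆ j, f j x) l (𝓝 0) := by
  refine tendsto_order.2 ⟨fun b hb => Eventually.of_forall fun x =>
    hb.trans_le (Real.iSup_nonneg (hf_nonneg · x)), fun b hb => ?_⟩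
  obtain ⟨N, hN⟩ := eventually_atTop.1 (hε.eventually (gt_mem_nhds (half_pos hb)))
  have hhead : ∀ᶠ x in l, ∀ j ∈ Finset.range N, f j x < b / 2 :=
    (Finset.range N).eventually_all.2 fun j _ => (hf j).eventually (gt_mem_nhds (half_pos hb))
  filter_upwards [hhead, hf_le] with x hhead hf_le
  refine (ciSup_le fun j => ?_).trans_lt (half_lt_self hb)
  rcases lt_or_ge j N with hj | hj
  · exact (hhead j (Finset.mem_range.2 hj)).le
  · exact (hf_le j).trans (hN j hj).le

namespace ClassKL

variable {σ : ℝ → ℝ → ℝ}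

theorem apply_zero_left (hσ : ClassKL σ) {t : ℝ} (ht : 0 ≤ t) : σ 0 t = 0 :=
  (hσ.2.1 t ht).2

theorem nonneg (hσ : ClassKL σ) {s t : ℝ} (hs : 0 ≤ s) (ht : 0 ≤ t) : 0 ≤ σ s t := by
  simpa [hσ.apply_zero_left ht] using (hσ.2.1 t ht).1.monotoneOn self_mem_Ici hs hs

theorem mono_left (hσ : ClassKL σ) {s s' t : ℝ} (ht : 0 ≤ t) (hs : 0 ≤ s) (hss' : s ≤ s') :
    σ s t ≤ σ s' t :=
  (hσ.2.1 t ht).1.monotoneOn hs (hs.trans hss') hss'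

theorem anti_right (hσ : ClassKL σ) {s t t' : ℝ} (hs : 0 ≤ s) (ht : 0 ≤ t) (htt' : t ≤ t') :
    σ s t' ≤ σ s t :=
  (hσ.2.2 s hs).1 ht (ht.trans htt') htt'

theorem tendsto_atTop (hσ : ClassKL σ) (s : ℝ) (hs : 0 ≤ s) : Tendsto (σ s) atTop (𝓝 0) :=
  (hσ.2.2 s hs).2

theorem tendsto_nhdsGT_zero (hσ : ClassKL σ) : Tendsto (fun s => σ s 0) (𝓝[>] 0) (𝓝 0) := by
  have h := (hσ.1 (0, 0) ⟨self_mem_Ici, self_mem_Ici⟩).comp (f := fun s : ℝ => (s, (0 : ℝ)))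
    (by fun_prop : Continuous fun s : ℝ => (s, (0 : ℝ))).continuousWithinAt
    (fun s hs => ⟨hs, self_mem_Ici⟩)
  simpa [Function.comp_def, hσ.apply_zero_left le_rfl] using
    h.tendsto.mono_left (nhdsWithin_mono _ Ioi_subset_Ici_self)

end ClassKL

/-- `σ (n + 1)` has decayed below `1 / (n + 1)` by time `τ n - n`; the margin `n` is what makes
the supremum `tailSup` below finite. -/
def DecayTimes (σ : ℝ → ℝ → ℝ) (τ : ℕ → ℝ) : Prop :=
  ∀ n : ℕ, ∀ t ≥ τ n, σ (n + 1) (max 0 (t - n)) ≤ 1 / (n + 1)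

theorem ClassKL.exists_decay_times {σ : ℝ → ℝ → ℝ} (hσ : ClassKL σ) :
    ∃ τ : ℕ → ℝ, Monotone τ ∧ DecayTimes σ τ := by
  have h : ∀ n : ℕ, ∃ T, ∀ t ≥ T, σ (n + 1) (max 0 (t - n)) ≤ 1 / (n + 1) := fun n =>
    have hshift : Tendsto (fun t : ℝ => max 0 (t - n)) atTop atTop :=
      tendsto_atTop_atTop.2 fun b => ⟨b + n, fun t ht => le_max_of_le_right (by linarith)⟩
    eventually_atTop.1 <| ((hσ.tendsto_atTop _ (by positivity)).comp hshift).eventually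
      (ge_mem_nhds (by positivity))
  choose T hT using h
  exact ⟨partialSups T, (partialSups T).monotone,
    fun n t ht => hT n t ((le_partialSups T n).trans ht)⟩

noncomputable def tailSup (σ : ℝ → ℝ → ℝ) (τ : ℕ → ℝ) (y : ℝ) : ℝ :=
  ⨆ j : ℕ, σ (j + 1) (max 0 (τ j - y / 2))

noncomputable def envelope (σ : ℝ → ℝ → ℝ) (τ : ℕ → ℝ) (y : ℝ) : ℝ :=
  max (σ (exp (y / 2)) 0) (tailSup σ τ y)

section envelope

variable {σ : ℝ → ℝ → ℝ} {τ : ℕ → ℝ}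

theorem tail_le_inv (hτ : DecayTimes σ τ) {j : ℕ} {y : ℝ} (hy : y ≤ 2 * j) :
    σ (j + 1) (max 0 (τ j - y / 2)) ≤ 1 / (j + 1) := by
  simpa using hτ j (τ j - y / 2 + j) (by linarith)

theorem bddAbove_tail (hσ : ClassKL σ) (hτ : DecayTimes σ τ) (y : ℝ) :
    BddAbove (range fun j : ℕ => σ (j + 1) (max 0 (τ j - y / 2))) := by
  refine ⟨max 1 (σ (|y| + 1) 0), forall_mem_range.2 fun j => ?_⟩
  rcases le_or_gt y (2 * j) with hy | hy
  · exact le_max_of_le_left <| (tail_le_inv hτ hy).trans <|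
      div_le_one_of_le₀ (by linarith [j.cast_nonneg (α := ℝ)]) (by positivity)
  · exact le_max_of_le_right <|
      (hσ.anti_right (by positivity) le_rfl (le_max_left _ _)).trans <|
        hσ.mono_left le_rfl (by positivity) (by linarith [le_abs_self y])

theorem monotone_tailSup (hσ : ClassKL σ) (hτ : DecayTimes σ τ) :
    Monotone (tailSup σ τ) := fun y y' hyy' =>
  ciSup_mono (bddAbove_tail hσ hτ y') fun _ =>
    hσ.anti_right (by positivity) (le_max_left _ _) (max_le_max le_rfl (by linarith))

theorem tendsto_tailSup_atBot (hσ : ClassKL σ) (hτ : DecayTimes σ τ) :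
    Tendsto (tailSup σ τ) atBot (𝓝 0) := by
  refine tendsto_iSup_nhds_zero (fun j => ?_) tendsto_one_div_add_atTop_nhds_zero_nat
    (fun _ _ => hσ.nonneg (by positivity) (le_max_left _ _)) ?_
  · exact (hσ.tendsto_atTop _ (by positivity)).comp <| tendsto_atBot_atTop.2 fun b =>
      ⟨2 * (τ j - b), fun y hy => le_max_of_le_right (by linarith)⟩
  · filter_upwards [Iic_mem_atBot 0] with y hy j
    exact tail_le_inv hτ (by linarith [mem_Iic.1 hy, j.cast_nonneg (α := ℝ)])

theorem monotone_envelope (hσ : ClassKL σ) (hτ : DecayTimes σ τ) :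
    Monotone (envelope σ τ) := fun y y' hyy' =>
  max_le_max (hσ.mono_left le_rfl (exp_pos _).le (exp_le_exp.2 (by linarith)))
    (monotone_tailSup hσ hτ hyy')

theorem tendsto_envelope_atBot (hσ : ClassKL σ) (hτ : DecayTimes σ τ) :
    Tendsto (envelope σ τ) atBot (𝓝 0) := by
  have h := (hσ.tendsto_nhdsGT_zero.comp (tendsto_exp_atBot_nhdsGT.comp
    (tendsto_id.atBot_div_const two_pos))).max (tendsto_tailSup_atBot hσ hτ)
  rw [max_self] at h
  exact h

/-- Either `s` is small compared with `y`, and `σ s t ≤ σ s 0` is small, or the time `t` exceeds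
`τ ⌊s⌋₊ - y / 2` and the decay of `σ (⌊s⌋₊ + 1)` applies. -/
theorem le_envelope (hσ : ClassKL σ) (hτ : DecayTimes σ τ) {s t : ℝ} (hs : 0 < s) (ht : 0 ≤ t) :
    σ s t ≤ envelope σ τ (log s + τ ⌊s⌋₊ - t) := by
  set y := log s + τ ⌊s⌋₊ - t
  rcases le_or_gt s (exp (y / 2)) with hsy | hsy
  · calc σ s t ≤ σ s 0 := hσ.anti_right hs.le le_rfl ht
      _ ≤ σ (exp (y / 2)) 0 := hσ.mono_left le_rfl hs.le hsy
      _ ≤ envelope σ τ y := le_max_left _ _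
  · have hlog : y / 2 < log s := (lt_log_iff_exp_lt hs).2 hsy
    calc σ s t ≤ σ (⌊s⌋₊ + 1) t := hσ.mono_left ht hs.le (Nat.lt_floor_add_one s).le
      _ ≤ σ (⌊s⌋₊ + 1) (max 0 (τ ⌊s⌋₊ - y / 2)) :=
        hσ.anti_right (by positivity) (le_max_left _ _) (max_le ht (by linarith))
      _ ≤ tailSup σ τ y := le_ciSup (bddAbove_tail hσ hτ y) ⌊s⌋₊
      _ ≤ envelope σ τ y := le_max_right _ _

end envelope

theorem stmt0 (σ : ℝ → ℝ → ℝ) (hσ : ClassKL σ) :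
    ∃ a₁ a₂ : ℝ → ℝ, ClassKInf a₁ ∧ ClassKInf a₂ ∧
      ∀ s ≥ (0:ℝ), ∀ t ≥ (0:ℝ), σ s t ≤ a₁ (Real.exp (-t) * a₂ s) := by
  obtain ⟨τ, hτ_mono, hτ⟩ := hσ.exists_decay_times
  obtain ⟨a₁, ha₁, h_envelope_le⟩ :=
    exists_classKInf_ge_comp_log (monotone_envelope hσ hτ) (tendsto_envelope_atBot hσ hτ)
  obtain ⟨a₂, ha₂, h_le_a₂⟩ := exists_classKInf_mul_exp_ge hτ_mono
  refine ⟨a₁, a₂, ha₁, ha₂, fun s hs t ht => ?_⟩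
  rcases hs.eq_or_lt with rfl | hs
  · simp [hσ.apply_zero_left ht, ha₂.1.2.2, ha₁.1.2.2]
  have ha₂s : 0 < a₂ s := (mul_pos hs (exp_pos _)).trans_le (h_le_a₂ s hs)
  have hlog : log s + τ ⌊s⌋₊ ≤ log (a₂ s) := by
    simpa [log_mul hs.ne' (exp_pos _).ne'] using
      log_le_log (mul_pos hs (exp_pos _)) (h_le_a₂ s hs)
  calc σ s t ≤ envelope σ τ (log s + τ ⌊s⌋₊ - t) := le_envelope hσ hτ hs ht
    _ ≤ envelope σ τ (log (exp (-t) * a₂ s)) := by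
      refine monotone_envelope hσ hτ ?_
      rw [log_mul (exp_pos _).ne' ha₂s.ne', log_exp]
      linarith
    _ ≤ a₁ (exp (-t) * a₂ s) := h_envelope_le _ (by positivity)
end

section
/- Let D ⊂ O ⊂ ℝⁿ with O open, and let Q, W : O → ℝ≥0 be continuous functions with Q(x) = W(x) = 0 for all x ∈ D, Q(x) > 0 for x ∈ O∖D, Q(O) = ℝ≥0, and such that for every r ≥ 0 the sublevel set {x ∈ O : Q(x) ≤ r} is compact. Then there exists a class-K∞ function ζ such that W(x) ≤ ζ(Q(x)) for all x ∈ O. -/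
/-!
Let `M r` be the supremum of `W` over the sublevel set `{Q ≤ r}`. It is finite by compactness,
nondecreasing, vanishes at `0` because `W = 0` where `Q = 0`, and is right-continuous at `0`:
on the compact set `{Q ≤ 1, W ≥ ε}` the continuous function `Q` is positive, hence bounded below
by some `δ > 0`, so `M δ ≤ ε`. Such an `M` is dominated by `r ↦ r + (mean of M over [r, 2r])`,
which is continuous (an average of a monotone function), strictly increasing and unbounded.
-/

open Set Filter Topology

section DoublingMean

/-- The mean of `M` over `[r, 2r]`, parametrised over `[0, 1]` so that it is visibly monotone
in `r` when `M` is, and equals `M 0` at `r = 0`. -/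
noncomputable def doublingMean (M : ℝ → ℝ) (r : ℝ) : ℝ :=
  ∫ t in (0 : ℝ)..1, M (r + r * t)

variable {M : ℝ → ℝ}

lemma doublingMean_zero (M : ℝ → ℝ) : doublingMean M 0 = M 0 := by
  simp [doublingMean]

lemma doublingMean_eq_inv_mul_integral (M : ℝ → ℝ) {r : ℝ} (hr : r ≠ 0) :
    doublingMean M r = r⁻¹ * ∫ t in r..2 * r, M t := by
  have h := intervalIntegral.integral_comp_mul_add (a := 0) (b := 1) M hr r
  rw [mul_zero, zero_add, mul_one, ← two_mul, smul_eq_mul] at h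
  simpa only [doublingMean, add_comm r] using h

lemma Monotone.comp_dilation (hM : Monotone M) {r : ℝ} (hr : 0 ≤ r) :
    Monotone fun t => M (r + r * t) :=
  hM.comp fun _ _ h => add_le_add_right (mul_le_mul_of_nonneg_left h hr) r

lemma monotoneOn_doublingMean (hM : Monotone M) : MonotoneOn (doublingMean M) (Ici 0) :=
  fun _ hr _ hr' hrr' =>
    intervalIntegral.integral_mono_on zero_le_one (hM.comp_dilation hr).intervalIntegrable
      (hM.comp_dilation hr').intervalIntegrable fun _ ht =>
        hM (add_le_add hrr' (mul_le_mul_of_nonneg_right hrr' ht.1))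

lemma le_doublingMean (hM : Monotone M) {r : ℝ} (hr : 0 ≤ r) : M r ≤ doublingMean M r := by
  simpa [doublingMean] using intervalIntegral.integral_mono_on (μ := MeasureTheory.volume)
    (f := fun _ => M r) zero_le_one intervalIntegrable_const
    (hM.comp_dilation hr).intervalIntegrable fun _ ht =>
      hM (le_add_of_nonneg_right (mul_nonneg hr ht.1))

lemma doublingMean_le (hM : Monotone M) {r : ℝ} (hr : 0 ≤ r) : doublingMean M r ≤ M (2 * r) := by
  simpa [doublingMean] using intervalIntegral.integral_mono_on (μ := MeasureTheory.volume)
    (g := fun _ => M (2 * r)) zero_le_one (hM.comp_dilation hr).intervalIntegrable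
    intervalIntegrable_const fun t ht => hM (by nlinarith [ht.2])

lemma continuousOn_doublingMean (hM : Monotone M) (h0 : ContinuousWithinAt M (Ici 0) 0) :
    ContinuousOn (doublingMean M) (Ici 0) := by
  intro r (hr : 0 ≤ r)
  rcases hr.eq_or_lt with rfl | hr
  · have h2 : Tendsto (fun r => M (2 * r)) (𝓝[≥] 0) (𝓝 (M 0)) := by
      simpa only [Function.comp_def, mul_zero] using
        (h0.comp_of_eq (continuous_const_mul 2).continuousWithinAt (s := Ici 0)
          (fun _ hr => mem_Ici.2 (mul_nonneg zero_le_two hr)) (mul_zero 2)).tendsto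
    rw [ContinuousWithinAt, doublingMean_zero]
    exact tendsto_of_tendsto_of_tendsto_of_le_of_le' h0 h2
      (eventually_nhdsWithin_of_forall fun r hr => le_doublingMean hM hr)
      (eventually_nhdsWithin_of_forall fun r hr => doublingMean_le hM hr)
  · -- away from `0` the mean is a difference quotient of the continuous primitive of `M`
    set F := fun x => ∫ t in (0 : ℝ)..x, M t
    have hF : Continuous F :=
      intervalIntegral.continuous_primitive (fun _ _ => hM.intervalIntegrable) 0
    have hmean : ∀ s ≠ 0, doublingMean M s = s⁻¹ * (F (2 * s) - F s) := fun s hs => by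
      rw [doublingMean_eq_inv_mul_integral M hs,
        intervalIntegral.integral_interval_sub_left hM.intervalIntegrable hM.intervalIntegrable]
    refine ContinuousAt.continuousWithinAt <| ContinuousAt.congr ?_ <|
      eventuallyEq_of_mem (Ioi_mem_nhds hr) fun s hs => (hmean s hs.ne').symm
    exact (continuousAt_inv₀ hr.ne').mul
      ((hF.comp (continuous_const_mul 2)).continuousAt.sub hF.continuousAt)

theorem exists_classKInf_ge_s1 (hM : Monotone M) (hM0 : M 0 = 0)
    (h0 : ContinuousWithinAt M (Ici 0) 0) : ∃ ζ, ClassKInf ζ ∧ ∀ r ≥ 0, M r ≤ ζ r := by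
  have hmean_nonneg : ∀ r ≥ 0, 0 ≤ doublingMean M r := fun r hr =>
    hM0 ▸ (hM hr).trans (le_doublingMean hM hr)
  refine ⟨fun r => r + doublingMean M r, ⟨⟨?_, ?_, ?_⟩, ?_⟩, ?_⟩
  · exact continuousOn_id.add (continuousOn_doublingMean hM h0)
  · exact fun r hr r' hr' h => add_lt_add_of_lt_of_le h (monotoneOn_doublingMean hM hr hr' h.le)
  · simp [doublingMean_zero, hM0]
  · exact tendsto_atTop_mono' _ (eventually_ge_atTop 0 |>.mono fun r hr =>
      le_add_of_nonneg_right (hmean_nonneg r hr)) tendsto_id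
  · exact fun r hr => (le_doublingMean hM hr).trans (le_add_of_nonneg_left hr)

end DoublingMean

section SublevelSup

variable {Y : Type*} {Q W : Y → ℝ}

/-- By the convention `sSup ∅ = 0` this vanishes when `{Q ≤ r}` is empty. -/
noncomputable def sublevelSup (Q W : Y → ℝ) (r : ℝ) : ℝ :=
  sSup (W '' {y | Q y ≤ r})

lemma sublevelSup_nonneg (hW0 : ∀ y, 0 ≤ W y) (r : ℝ) : 0 ≤ sublevelSup Q W r :=
  Real.sSup_nonneg <| forall_mem_image.2 fun y _ => hW0 y

lemma sublevelSup_zero (hW0 : ∀ y, 0 ≤ W y) (hzero : ∀ y, Q y ≤ 0 → W y ≤ 0) :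
    sublevelSup Q W 0 = 0 :=
  le_antisymm (Real.sSup_le (forall_mem_image.2 hzero) le_rfl) (sublevelSup_nonneg hW0 0)

variable [TopologicalSpace Y]

lemma le_sublevelSup (hW : Continuous W) {r : ℝ} (hK : IsCompact {y | Q y ≤ r}) {y : Y}
    (hy : Q y ≤ r) : W y ≤ sublevelSup Q W r :=
  le_csSup (hK.bddAbove_image hW.continuousOn) (mem_image_of_mem W hy)

lemma monotone_sublevelSup (hW : Continuous W) (hQ0 : ∀ y, 0 ≤ Q y) (hW0 : ∀ y, 0 ≤ W y)
    (hK : ∀ r ≥ 0, IsCompact {y | Q y ≤ r}) : Monotone (sublevelSup Q W) := fun r r' h =>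
  Real.sSup_le (forall_mem_image.2 fun y (hy : Q y ≤ r) =>
      le_sublevelSup hW (hK r' ((hQ0 y).trans (hy.trans h))) (hy.trans h))
    (sublevelSup_nonneg hW0 r')

lemma exists_pos_forall_lt_of_sublevel (hQ : Continuous Q) (hW : Continuous W) {r : ℝ}
    (hr : 0 < r) (hK : IsCompact {y | Q y ≤ r}) (hzero : ∀ y, Q y ≤ 0 → W y ≤ 0) {ε : ℝ}
    (hε : 0 < ε) : ∃ δ > 0, ∀ y, Q y ≤ δ → W y < ε := by
  have hKε : IsCompact ({y | Q y ≤ r} ∩ {y | ε ≤ W y}) :=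
    hK.inter_right (isClosed_le continuous_const hW)
  obtain ⟨δ, hδ, hδQ⟩ := hKε.exists_forall_le' hQ.continuousOn fun y hy =>
    lt_of_not_ge fun hQy => (hzero y hQy).not_gt (hε.trans_le hy.2)
  refine ⟨min r (δ / 2), lt_min hr (half_pos hδ), fun y hy => lt_of_not_ge fun hWy => ?_⟩
  have := hδQ y ⟨hy.trans (min_le_left _ _), hWy⟩
  linarith [min_le_right r (δ / 2)]

lemma continuousWithinAt_sublevelSup_zero (hQ : Continuous Q) (hW : Continuous W)
    (hQ0 : ∀ y, 0 ≤ Q y) (hW0 : ∀ y, 0 ≤ W y) (hK : ∀ r ≥ 0, IsCompact {y | Q y ≤ r})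
    (hzero : ∀ y, Q y ≤ 0 → W y ≤ 0) : ContinuousWithinAt (sublevelSup Q W) (Ici 0) 0 := by
  rw [ContinuousWithinAt, sublevelSup_zero hW0 hzero]
  refine tendsto_order.2 ⟨fun a ha => Eventually.of_forall fun r => ha.trans_le
    (sublevelSup_nonneg hW0 r), fun ε hε => ?_⟩
  obtain ⟨δ, hδ, hδW⟩ := exists_pos_forall_lt_of_sublevel hQ hW one_pos (hK 1 zero_le_one) hzero
    (half_pos hε)
  filter_upwards [Ico_mem_nhdsGE hδ] with r hr
  calc sublevelSup Q W r ≤ sublevelSup Q W δ := monotone_sublevelSup hW hQ0 hW0 hK hr.2.le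
    _ ≤ ε / 2 := Real.sSup_le (forall_mem_image.2 fun y hy => (hδW y hy).le) (half_pos hε).le
    _ < ε := half_lt_self hε

end SublevelSup

theorem stmt1_general (n : ℕ) (O D : Set (EuclideanSpace ℝ (Fin n)))
    (Q W : EuclideanSpace ℝ (Fin n) → ℝ)
    (hQc : ContinuousOn Q O) (hWc : ContinuousOn W O)
    (hQnn : ∀ x ∈ O, 0 ≤ Q x) (hWnn : ∀ x ∈ O, 0 ≤ W x)
    (hD : ∀ x ∈ D, Q x = 0 ∧ W x = 0)
    (hQpos : ∀ x ∈ O \ D, 0 < Q x)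
    (hcomp : ∀ r ≥ (0:ℝ), IsCompact {x ∈ O | Q x ≤ r}) :
    ∃ ζ : ℝ → ℝ, ClassKInf ζ ∧ ∀ x ∈ O, W x ≤ ζ (Q x) := by
  set q := O.domRestrict Q
  set w := O.domRestrict W
  have hq : Continuous q := continuousOn_iff_continuous_domRestrict.1 hQc
  have hw : Continuous w := continuousOn_iff_continuous_domRestrict.1 hWc
  have hq0 : ∀ y, 0 ≤ q y := fun y => hQnn y y.2
  have hw0 : ∀ y, 0 ≤ w y := fun y => hWnn y y.2
  have hK : ∀ r ≥ 0, IsCompact {y | q y ≤ r} := fun r hr => by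
    rw [Subtype.isCompact_iff]
    convert hcomp r hr using 1
    ext x
    simp [q, and_comm]
  have hzero : ∀ y, q y ≤ 0 → w y ≤ 0 := fun y hy => by
    by_cases hyD : (y : EuclideanSpace ℝ (Fin n)) ∈ D
    · exact (hD y hyD).2.le
    · exact absurd hy (hQpos y ⟨y.2, hyD⟩).not_ge
  obtain ⟨ζ, hζ, hζM⟩ := exists_classKInf_ge_s1 (monotone_sublevelSup hw hq0 hw0 hK)
    (sublevelSup_zero hw0 hzero) (continuousWithinAt_sublevelSup_zero hq hw hq0 hw0 hK hzero)
  exact ⟨ζ, hζ, fun x hx => (le_sublevelSup hw (hK _ (hq0 ⟨x, hx⟩)) le_rfl).trans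
    (hζM _ (hq0 ⟨x, hx⟩))⟩

theorem stmt1 (n : ℕ) (O D : Set (EuclideanSpace ℝ (Fin n))) (hO : IsOpen O)
    (hDO : D ⊆ O) (Q W : EuclideanSpace ℝ (Fin n) → ℝ)
    (hQc : ContinuousOn Q O) (hWc : ContinuousOn W O)
    (hQnn : ∀ x ∈ O, 0 ≤ Q x) (hWnn : ∀ x ∈ O, 0 ≤ W x)
    (hD : ∀ x ∈ D, Q x = 0 ∧ W x = 0)
    (hQpos : ∀ x ∈ O \ D, 0 < Q x)
    (hQsurj : Q '' O = Set.Ici 0)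
    (hcomp : ∀ r ≥ (0:ℝ), IsCompact {x ∈ O | Q x ≤ r}) :
    ∃ ζ : ℝ → ℝ, ClassKInf ζ ∧ ∀ x ∈ O, W x ≤ ζ (Q x) :=
  stmt1_general n O D Q W hQc hWc hQnn hWnn hD hQpos hcomp
end

section
/- Let D ⊂ O ⊂ ℝⁿ with O open, and let Q, W : O → ℝ≥0 be continuous with Q(x) = W(x) = 0 for x ∈ D, Q(x) > 0 and W(x) > 0 for x ∈ O∖D, Q(O) = ℝ≥0, and every sublevel set {x ∈ O : Q(x) ≤ r} compact. Then there exists a positive definite, globally Lipschitz function ρ : ℝ≥0 → ℝ≥0 such that W(x) ≥ ρ(Q(x)) for all x ∈ O. -/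
theorem stmt2 (n : ℕ) (O D : Set (EuclideanSpace ℝ (Fin n))) (hO : IsOpen O)
    (hDO : D ⊆ O) (Q W : EuclideanSpace ℝ (Fin n) → ℝ)
    (hQc : ContinuousOn Q O) (hWc : ContinuousOn W O)
    (hQnn : ∀ x ∈ O, 0 ≤ Q x) (hWnn : ∀ x ∈ O, 0 ≤ W x)
    (hD : ∀ x ∈ D, Q x = 0 ∧ W x = 0)
    (hQpos : ∀ x ∈ O \ D, 0 < Q x)
    (hWpos : ∀ x ∈ O \ D, 0 < W x)
    (hQsurj : Q '' O = Set.Ici 0)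
    (hcomp : ∀ r ≥ (0:ℝ), IsCompact {x ∈ O | Q x ≤ r}) :
    ∃ ρ : ℝ → ℝ, ρ 0 = 0 ∧ (∀ s > (0:ℝ), 0 < ρ s) ∧
      (∃ K : NNReal, LipschitzOnWith K ρ (Set.Ici 0)) ∧
      ∀ x ∈ O, ρ (Q x) ≤ W x := by
  classical
  -- the integrand
  set f : ℝ → EuclideanSpace ℝ (Fin n) → ℝ :=
    fun s x => min (W x) 1 + |s - Q x| with hf
  -- a point with Q = 0
  have h0 : (0:ℝ) ∈ Q '' O := by rw [hQsurj]; exact Set.self_mem_Ici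
  obtain ⟨x₀, hx₀O, hx₀Q⟩ := h0
  have hx₀D : x₀ ∈ D := by
    by_contra hxD
    exact absurd hx₀Q (ne_of_gt (hQpos x₀ ⟨hx₀O, hxD⟩))
  have hx₀W : W x₀ = 0 := (hD x₀ hx₀D).2
  have hne : ∀ s : ℝ, ((f s) '' O).Nonempty := fun s => ⟨_, ⟨x₀, hx₀O, rfl⟩⟩
  have hfnn : ∀ s : ℝ, ∀ x ∈ O, 0 ≤ f s x := by
    intro s x hx
    have := hWnn x hx
    have : (0:ℝ) ≤ min (W x) 1 := le_min this zero_le_one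
    positivity
  have hbdd : ∀ s : ℝ, BddBelow ((f s) '' O) := by
    intro s
    refine ⟨0, ?_⟩
    rintro y ⟨x, hx, rfl⟩
    exact hfnn s x hx
  set ρ : ℝ → ℝ := fun s => sInf ((f s) '' O) with hρ
  have hρle : ∀ s : ℝ, ∀ x ∈ O, ρ s ≤ f s x := by
    intro s x hx
    exact csInf_le (hbdd s) ⟨x, hx, rfl⟩
  have hρnn : ∀ s : ℝ, 0 ≤ ρ s := by
    intro s
    exact le_csInf (hne s) (by rintro y ⟨x, hx, rfl⟩; exact hfnn s x hx)
  refine ⟨ρ, ?_, ?_, ?_, ?_⟩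
  · -- ρ 0 = 0
    have h1 : ρ 0 ≤ f 0 x₀ := hρle 0 x₀ hx₀O
    have h2 : f 0 x₀ = 0 := by
      simp [hf, hx₀Q, hx₀W]
    exact le_antisymm (h1.trans h2.le) (hρnn 0)
  · -- positivity
    intro s hs
    -- compact sublevel set
    have hKcomp := hcomp (s + 1) (by linarith)
    set K : Set (EuclideanSpace ℝ (Fin n)) := {x ∈ O | Q x ≤ s + 1} with hK
    have hKO : K ⊆ O := fun x hx => hx.1
    have hKne : K.Nonempty := ⟨x₀, hx₀O, by rw [hx₀Q]; linarith⟩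
    have hFcont : ContinuousOn (f s) K := by
      apply ContinuousOn.add
      · exact ContinuousOn.inf (hWc.mono hKO) continuousOn_const
      · exact ((continuousOn_const.sub (hQc.mono hKO)).abs)
    obtain ⟨z, hzK, hzmin⟩ := hKcomp.exists_isMinOn hKne hFcont
    -- f s is positive at every point of O
    have hfpos : ∀ x ∈ O, 0 < f s x := by
      intro x hx
      rcases (hQnn x hx).lt_or_eq with hq | hq
      · -- Q x > 0, so x ∉ D, so W x > 0
        have hxD : x ∉ D := fun hxd => absurd ((hD x hxd).1) (ne_of_gt hq)
        have hw : 0 < W x := hWpos x ⟨hx, hxD⟩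
        have : 0 < min (W x) 1 := lt_min hw one_pos
        have h2 : (0:ℝ) ≤ |s - Q x| := abs_nonneg _
        simp only [hf]
        linarith
      · -- Q x = 0, so |s - Q x| = s > 0
        have : |s - Q x| = s := by rw [← hq]; simp [abs_of_pos hs]
        have h2 : (0:ℝ) ≤ min (W x) 1 := le_min (hWnn x hx) zero_le_one
        simp only [hf]
        linarith
    have hz : 0 < f s z := hfpos z (hKO hzK)
    have hlb : min (f s z) 1 ≤ ρ s := by
      apply le_csInf (hne s)
      rintro y ⟨x, hx, rfl⟩
      by_cases hxK : Q x ≤ s + 1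
      · exact le_trans (min_le_left _ _) (hzmin ⟨hx, hxK⟩)
      · push_neg at hxK
        have h1 : (1:ℝ) ≤ |s - Q x| := by
          rw [abs_sub_comm, abs_of_pos (by linarith)]
          linarith
        have h2 : (0:ℝ) ≤ min (W x) 1 := le_min (hWnn x hx) zero_le_one
        have : (1:ℝ) ≤ f s x := by simp only [hf]; linarith
        exact le_trans (min_le_right _ _) this
    exact lt_of_lt_of_le (lt_min hz one_pos) hlb
  · -- Lipschitz
    refine ⟨1, ?_⟩
    have hlip : ∀ s t : ℝ, ρ s ≤ ρ t + |s - t| := by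
      intro s t
      have : ρ s - |s - t| ≤ ρ t := by
        apply le_csInf (hne t)
        rintro y ⟨x, hx, rfl⟩
        have h1 : ρ s ≤ f s x := hρle s x hx
        have h2 : |s - Q x| ≤ |t - Q x| + |s - t| := by
          have := abs_sub_abs_le_abs_sub (s - Q x) (t - Q x)
          have h3 : |s - Q x - (t - Q x)| = |s - t| := by ring_nf
          calc |s - Q x| ≤ |t - Q x| + |s - Q x - (t - Q x)| := by
                have := abs_sub (s - Q x) (t - Q x)
                linarith [abs_sub_le (s - Q x) (t - Q x) 0,
                  abs_add_le (t - Q x) (s - Q x - (t - Q x))]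
            _ = |t - Q x| + |s - t| := by rw [h3]
        simp only [hf] at h1 ⊢
        linarith
      linarith
    apply LipschitzOnWith.of_dist_le_mul
    intro s hs t ht
    rw [Real.dist_eq, Real.dist_eq]
    have h1 := hlip s t
    have h2 := hlip t s
    rw [abs_sub_comm t s] at h2
    rw [NNReal.coe_one, one_mul]
    rw [abs_sub_le_iff]
    constructor <;> linarith
  · -- ρ (Q x) ≤ W x
    intro x hx
    have h1 : ρ (Q x) ≤ f (Q x) x := hρle (Q x) x hx
    have h2 : f (Q x) x ≤ W x := by
      simp [hf, min_le_left]
    exact h1.trans h2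
end

section
/- Let ρ̄ : ℝ≥0 → ℝ≥0 be non-decreasing with ρ̄(0)=0 and lim_{s→0⁺} ρ̄(s) = 0. Then there exists a class-K∞ function ζ with ρ̄(s) ≤ ζ(s) for all s ≥ 0. -/
/-!
Averaging a non-decreasing `f` over `[s, 2s]` gives `g s = s⁻¹ ∫_s^{2s} f`, which is continuous
for `s > 0` (a difference of primitives divided by `s`), non-decreasing, and squeezed as
`f s ≤ g s ≤ f (2 s)`; the upper bound makes `g` continuous at `0` exactly when `f` is
right-continuous there. Then `s ↦ s + g s` is of class `K∞` and dominates `f`.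
-/

open Set Filter MeasureTheory intervalIntegral Topology

/-- The mean `s⁻¹ ∫_s^{2s} f`, written after rescaling so that it is visibly monotone in `s`
and needs no case split at `s = 0`. -/
noncomputable def dyadicAverage (f : ℝ → ℝ) (s : ℝ) : ℝ :=
  ∫ t in (1:ℝ)..2, f (s * t)

lemma dyadicAverage_eq_mean (f : ℝ → ℝ) {s : ℝ} (hs : s ≠ 0) :
    dyadicAverage f s = s⁻¹ * ∫ u in s..2 * s, f u := by
  rw [dyadicAverage, integral_comp_mul_left f hs, smul_eq_mul, mul_one, mul_comm s 2]

namespace Monotone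

variable {f : ℝ → ℝ} (hf : Monotone f)
include hf

lemma intervalIntegrable_comp_mul {s : ℝ} (hs : 0 ≤ s) (a b : ℝ) :
    IntervalIntegrable (fun t => f (s * t)) volume a b :=
  ((hf.comp (monotone_mul_left_of_nonneg hs)).monotoneOn _).intervalIntegrable

lemma le_dyadicAverage {s : ℝ} (hs : 0 ≤ s) : f s ≤ dyadicAverage f s := by
  have h := integral_mono_on (by norm_num) intervalIntegrable_const
    (hf.intervalIntegrable_comp_mul hs 1 2) fun t ht => hf (le_mul_of_one_le_right hs ht.1)
  norm_num at h
  exact h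

lemma dyadicAverage_le {s : ℝ} (hs : 0 ≤ s) : dyadicAverage f s ≤ f (2 * s) := by
  have h := integral_mono_on (by norm_num) (hf.intervalIntegrable_comp_mul hs 1 2)
    intervalIntegrable_const fun t ht => hf (by nlinarith [ht.2] : s * t ≤ 2 * s)
  norm_num at h
  exact h

lemma monotoneOn_dyadicAverage : MonotoneOn (dyadicAverage f) (Ici 0) :=
  fun a ha b hb hab => integral_mono_on (by norm_num) (hf.intervalIntegrable_comp_mul ha 1 2)
    (hf.intervalIntegrable_comp_mul hb 1 2) fun t ht =>
      hf (mul_le_mul_of_nonneg_right hab (by linarith [ht.1]))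

lemma continuousOn_dyadicAverage_Ioi : ContinuousOn (dyadicAverage f) (Ioi 0) := by
  have hint : ∀ a b : ℝ, IntervalIntegrable f volume a b := fun a b =>
    (hf.monotoneOn _).intervalIntegrable
  have hF : Continuous fun x => ∫ u in (0:ℝ)..x, f u := continuous_primitive hint 0
  refine ContinuousOn.congr (f := fun s => s⁻¹ * ((∫ u in (0:ℝ)..2 * s, f u) -
      ∫ u in (0:ℝ)..s, f u)) ?_ fun s hs => ?_
  · exact (continuousOn_id.inv₀ fun x hx => hx.ne').mul
      ((hF.comp (continuous_const_mul 2)).sub hF).continuousOn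
  · dsimp only
    rw [dyadicAverage_eq_mean f (ne_of_gt hs), integral_interval_sub_left (hint 0 _) (hint 0 _)]

lemma continuousWithinAt_dyadicAverage_zero (hc : ContinuousWithinAt f (Ici 0) 0) :
    ContinuousWithinAt (dyadicAverage f) (Ici 0) 0 := by
  have hdouble : Tendsto (fun s => f (2 * s)) (𝓝[Ici 0] 0) (𝓝 (f 0)) := by
    have h := ContinuousWithinAt.comp
      (show ContinuousWithinAt f (Ici 0) (2 * 0) by simpa using hc)
      (continuous_const_mul 2).continuousWithinAt
      fun s hs => mul_nonneg zero_le_two (mem_Ici.1 hs)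
    simpa [ContinuousWithinAt, Function.comp_def] using h
  have hlower : ∀ᶠ s in 𝓝[Ici 0] 0, f 0 ≤ dyadicAverage f s :=
    eventually_mem_nhdsWithin.mono fun s hs => (hf hs).trans (hf.le_dyadicAverage hs)
  have hupper : ∀ᶠ s in 𝓝[Ici 0] 0, dyadicAverage f s ≤ f (2 * s) :=
    eventually_mem_nhdsWithin.mono fun s hs => hf.dyadicAverage_le hs
  have hg0 : dyadicAverage f 0 = f 0 := by norm_num [dyadicAverage]
  rw [ContinuousWithinAt, hg0]
  exact tendsto_of_tendsto_of_tendsto_of_le_of_le' tendsto_const_nhds hdouble hlower hupper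

lemma continuousOn_dyadicAverage (hc : ContinuousWithinAt f (Ici 0) 0) :
    ContinuousOn (dyadicAverage f) (Ici 0) := by
  intro s hs
  rcases (mem_Ici.mp hs).eq_or_lt with rfl | hpos
  · exact hf.continuousWithinAt_dyadicAverage_zero hc
  · exact ((hf.continuousOn_dyadicAverage_Ioi s hpos).continuousAt
      (Ioi_mem_nhds hpos)).continuousWithinAt

theorem exists_classKInf_ge (h0 : f 0 = 0) (hc : ContinuousWithinAt f (Ici 0) 0) :
    ∃ ζ : ℝ → ℝ, ClassKInf ζ ∧ ∀ s ≥ (0:ℝ), f s ≤ ζ s := by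
  have hg0 : dyadicAverage f 0 = 0 := by simp [dyadicAverage, h0]
  have hg_nonneg : ∀ s ≥ (0:ℝ), 0 ≤ dyadicAverage f s := fun s hs =>
    hg0 ▸ hf.monotoneOn_dyadicAverage self_mem_Ici hs hs
  refine ⟨fun s => s + dyadicAverage f s, ⟨⟨?_, ?_, by simp [hg0]⟩, ?_⟩, fun s hs => ?_⟩
  · exact continuousOn_id.add (hf.continuousOn_dyadicAverage hc)
  · exact fun a ha b hb hab => add_lt_add_of_lt_of_le hab
      (hf.monotoneOn_dyadicAverage ha hb hab.le)
  · exact tendsto_atTop_mono' atTop ((eventually_ge_atTop 0).mono fun s hs =>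
      le_add_of_nonneg_right (hg_nonneg s hs)) tendsto_id
  · exact (hf.le_dyadicAverage hs).trans (le_add_of_nonneg_left hs)

end Monotone

lemma MonotoneOn.monotone_comp_max {f : ℝ → ℝ} {a : ℝ} (hf : MonotoneOn f (Ici a)) :
    Monotone fun u => f (max u a) :=
  fun _ _ huv => hf (mem_Ici.2 (le_max_right _ _)) (mem_Ici.2 (le_max_right _ _))
    (max_le_max huv le_rfl)

theorem stmt4 (ρbar : ℝ → ℝ) (hmono : MonotoneOn ρbar (Set.Ici 0))
    (h0 : ρbar 0 = 0)
    (hlim : Filter.Tendsto ρbar (nhdsWithin 0 (Set.Ioi 0)) (nhds 0)) :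
    ∃ ζ : ℝ → ℝ, ClassKInf ζ ∧ ∀ s ≥ (0:ℝ), ρbar s ≤ ζ s := by
  set ρ : ℝ → ℝ := fun u => ρbar (max u 0)
  have hρ : ∀ s ≥ (0:ℝ), ρ s = ρbar s := fun s hs => by simp only [ρ, max_eq_left hs]
  have hc : ContinuousWithinAt ρ (Ici 0) 0 := by
    rw [← continuousWithinAt_Ioi_iff_Ici, ContinuousWithinAt, hρ 0 le_rfl, h0]
    exact hlim.congr' (eventually_mem_nhdsWithin.mono fun s hs => (hρ s (le_of_lt hs)).symm)
  obtain ⟨ζ, hζ, hle⟩ := hmono.monotone_comp_max.exists_classKInf_ge (by simp [h0]) hc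
  exact ⟨ζ, hζ, fun s hs => hρ s hs ▸ hle s hs⟩
end

section
/- Suppose the scalar differential inequality u̇(t) ≤ −ρ(u(t)) holds for t ≥ 0, where u : ℝ≥0 → ℝ≥0 is absolutely continuous and ρ : ℝ≥0 → ℝ≥0 is continuous, positive definite, and globally Lipschitz. Then there exists a class-KL function σ (depending only on ρ) such that u(t) ≤ σ(u(0), t) for all t ≥ 0. -/
/-!
Replace `ρ` by the slower rate `a r = min (ρ r) r / 2` and put `G s = ∫₁ˢ dr / a r`. Since
`a r ≤ r`, `G - log` is nondecreasing, so `G` is an increasing bijection `(0, ∞) → ℝ`, and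
`σ s t = G⁻¹ (G s - t)`, the flow of `ẋ = -a x`, is of class KL. Since `a < ρ` on `(0, ∞)`, the
flow started at any `s ≥ u 0` is a strict barrier for `u`, so the fencing theorem gives
`u t ≤ G⁻¹ (G s - t)`; when `u 0 = 0`, let `s ↓ 0`.
-/

open MeasureTheory intervalIntegral Set Filter Topology

namespace KLComparison

section InverseOnIoi

variable {G : ℝ → ℝ} (hmono : StrictMonoOn G (Ioi 0)) (hsurj : SurjOn G (Ioi 0) univ)

noncomputable def orderIsoIoi : Ioi (0:ℝ) ≃o ℝ :=
  StrictMono.orderIsoOfSurjective ((Ioi 0).domRestrict G) (fun x y h => hmono x.2 y.2 h)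
    fun y => let ⟨x, hx, hxy⟩ := hsurj (mem_univ y); ⟨⟨x, hx⟩, hxy⟩

noncomputable def invIoi (y : ℝ) : ℝ := (orderIsoIoi hmono hsurj).symm y

theorem invIoi_pos (y : ℝ) : 0 < invIoi hmono hsurj y :=
  ((orderIsoIoi hmono hsurj).symm y).2

theorem apply_invIoi (y : ℝ) : G (invIoi hmono hsurj y) = y :=
  (orderIsoIoi hmono hsurj).apply_symm_apply y

theorem invIoi_le_iff {y s : ℝ} (hs : 0 < s) : invIoi hmono hsurj y ≤ s ↔ y ≤ G s :=
  (orderIsoIoi hmono hsurj).symm_apply_le (x := ⟨s, hs⟩) (y := y)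

theorem invIoi_lt_iff {y s : ℝ} (hs : 0 < s) : invIoi hmono hsurj y < s ↔ y < G s :=
  (orderIsoIoi hmono hsurj).symm_apply_lt (x := ⟨s, hs⟩) (y := y)

theorem invIoi_apply {s : ℝ} (hs : 0 < s) : invIoi hmono hsurj (G s) = s :=
  congrArg Subtype.val ((orderIsoIoi hmono hsurj).symm_apply_apply ⟨s, hs⟩)

theorem strictMono_invIoi : StrictMono (invIoi hmono hsurj) :=
  (orderIsoIoi hmono hsurj).symm.strictMono

theorem continuous_invIoi : Continuous (invIoi hmono hsurj) :=
  continuous_subtype_val.comp (orderIsoIoi hmono hsurj).symm.continuous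

theorem continuousOn_of_strictMonoOn_of_surjOn (hmono : StrictMonoOn G (Ioi 0))
    (hsurj : SurjOn G (Ioi 0) univ) : ContinuousOn G (Ioi 0) :=
  continuousOn_iff_continuous_domRestrict.2 (orderIsoIoi hmono hsurj).continuous

theorem tendsto_invIoi_atBot : Tendsto (invIoi hmono hsurj) atBot (𝓝 0) := by
  refine tendsto_order.2 ⟨fun a ha => .of_forall fun y => ha.trans (invIoi_pos hmono hsurj y),
    fun a ha => ?_⟩
  filter_upwards [eventually_lt_atBot (G a)] with y hy
  exact (invIoi_lt_iff hmono hsurj ha).2 hy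

theorem hasDerivAt_invIoi {G' : ℝ → ℝ} (hG : ∀ s > 0, HasDerivAt G (G' s) s)
    (hG' : ∀ s > 0, G' s ≠ 0) (y : ℝ) :
    HasDerivAt (invIoi hmono hsurj) (G' (invIoi hmono hsurj y))⁻¹ y :=
  (hG _ (invIoi_pos hmono hsurj y)).of_local_left_inverse
    (continuous_invIoi hmono hsurj).continuousAt (hG' _ (invIoi_pos hmono hsurj y))
    (.of_forall (apply_invIoi hmono hsurj))

end InverseOnIoi

section KLFunction

variable {G : ℝ → ℝ} (hmono : StrictMonoOn G (Ioi 0)) (hsurj : SurjOn G (Ioi 0) univ)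

noncomputable def klOf (s t : ℝ) : ℝ := if 0 < s then invIoi hmono hsurj (G s - t) else 0

theorem klOf_of_pos {s : ℝ} (hs : 0 < s) (t : ℝ) :
    klOf hmono hsurj s t = invIoi hmono hsurj (G s - t) := if_pos hs

theorem klOf_of_nonpos {s : ℝ} (hs : s ≤ 0) (t : ℝ) : klOf hmono hsurj s t = 0 :=
  if_neg hs.not_gt

theorem klOf_nonneg (s t : ℝ) : 0 ≤ klOf hmono hsurj s t := by
  unfold klOf
  split_ifs
  exacts [(invIoi_pos hmono hsurj _).le, le_rfl]

theorem klOf_le_self {s t : ℝ} (hs : 0 ≤ s) (ht : 0 ≤ t) : klOf hmono hsurj s t ≤ s := by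
  rcases hs.lt_or_eq with hs | rfl
  · rw [klOf_of_pos hmono hsurj hs, invIoi_le_iff hmono hsurj hs]
    linarith
  · exact (klOf_of_nonpos hmono hsurj le_rfl t).le

theorem continuousOn_klOf :
    ContinuousOn (fun p : ℝ × ℝ => klOf hmono hsurj p.1 p.2) (Ici 0 ×ˢ Ici 0) := by
  rintro ⟨s, t⟩ ⟨hs, ht⟩
  rcases (mem_Ici.1 hs).lt_or_eq with hs | rfl
  · have hG : ContinuousAt G s :=
      (continuousOn_of_strictMonoOn_of_surjOn hmono hsurj).continuousAt (Ioi_mem_nhds hs)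
    have hformula : (fun p : ℝ × ℝ => invIoi hmono hsurj (G p.1 - p.2))
        =ᶠ[𝓝 (s, t)] fun p => klOf hmono hsurj p.1 p.2 := by
      filter_upwards [continuousAt_fst.eventually (Ioi_mem_nhds hs)] with p hp
      exact (klOf_of_pos hmono hsurj hp p.2).symm
    exact (((continuous_invIoi hmono hsurj).continuousAt.comp
      ((hG.comp continuousAt_fst).sub continuousAt_snd)).congr hformula).continuousWithinAt
  · show Tendsto _ _ (𝓝 (klOf hmono hsurj 0 t))
    rw [klOf_of_nonpos hmono hsurj le_rfl]
    refine squeeze_zero' (.of_forall fun p => klOf_nonneg hmono hsurj p.1 p.2) ?_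
      (continuousAt_fst.continuousWithinAt (x := ((0:ℝ), t)))
    filter_upwards [self_mem_nhdsWithin] with p hp
    exact klOf_le_self hmono hsurj hp.1 hp.2

theorem classKL_klOf : ClassKL (klOf hmono hsurj) := by
  refine ⟨continuousOn_klOf hmono hsurj, fun t _ => ⟨?_, klOf_of_nonpos hmono hsurj le_rfl t⟩,
    fun s hs => ?_⟩
  · intro s₁ hs₁ s₂ hs₂ h
    have hs₂ : 0 < s₂ := (mem_Ici.1 hs₁).trans_lt h
    simp only [klOf_of_pos hmono hsurj hs₂]
    rcases (mem_Ici.1 hs₁).lt_or_eq with hs₁ | rfl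
    · rw [klOf_of_pos hmono hsurj hs₁]
      exact strictMono_invIoi hmono hsurj (by linarith [hmono hs₁ hs₂ h])
    · rw [klOf_of_nonpos hmono hsurj le_rfl]
      exact invIoi_pos hmono hsurj _
  rcases hs.lt_or_eq with hs | rfl
  · simp only [klOf_of_pos hmono hsurj hs]
    refine ⟨fun t₁ _ t₂ _ h => (strictMono_invIoi hmono hsurj).monotone (by linarith), ?_⟩
    exact (tendsto_invIoi_atBot hmono hsurj).comp (tendsto_atBot_add_const_left _ _
      tendsto_neg_atTop_atBot)
  · simp only [klOf_of_nonpos hmono hsurj le_rfl]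
    exact ⟨antitoneOn_const, tendsto_const_nhds⟩

end KLFunction

section Potential

noncomputable def potential (a : ℝ → ℝ) (s : ℝ) : ℝ := ∫ r in (1:ℝ)..s, (a r)⁻¹

variable {a : ℝ → ℝ}

theorem hasDerivAt_potential (ha : ContinuousOn a (Ioi 0)) (hpos : ∀ r > 0, 0 < a r) {s : ℝ}
    (hs : 0 < s) : HasDerivAt (potential a) (a s)⁻¹ s := by
  have hcont : ContinuousOn (fun r => (a r)⁻¹) (Ioi 0) := ha.inv₀ fun r hr => (hpos r hr).ne'
  have hsub : uIcc 1 s ⊆ Ioi 0 := fun x hx => (lt_min one_pos hs).trans_le hx.1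
  exact integral_hasDerivAt_right (hcont.mono hsub).intervalIntegrable
    (hcont.stronglyMeasurableAtFilter isOpen_Ioi s hs) (hcont.continuousAt (Ioi_mem_nhds hs))

theorem strictMonoOn_potential (ha : ContinuousOn a (Ioi 0)) (hpos : ∀ r > 0, 0 < a r) :
    StrictMonoOn (potential a) (Ioi 0) := by
  have hderiv := fun s (hs : s ∈ Ioi (0:ℝ)) => hasDerivAt_potential ha hpos hs
  refine strictMonoOn_of_hasDerivWithinAt_pos (convex_Ioi 0) (f' := fun s => (a s)⁻¹)
    (fun s hs => (hderiv s hs).continuousAt.continuousWithinAt) ?_ ?_ <;> rw [interior_Ioi]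
  exacts [fun s hs => (hderiv s hs).hasDerivWithinAt, fun s hs => inv_pos.2 (hpos s hs)]

theorem monotoneOn_potential_sub_log (ha : ContinuousOn a (Ioi 0)) (hpos : ∀ r > 0, 0 < a r)
    (hle : ∀ r > 0, a r ≤ r) :
    MonotoneOn (fun s => potential a s - Real.log s) (Ioi 0) := by
  have hderiv := fun s (hs : s ∈ Ioi (0:ℝ)) =>
    (hasDerivAt_potential ha hpos hs).sub (Real.hasDerivAt_log (ne_of_gt hs))
  refine monotoneOn_of_hasDerivWithinAt_nonneg (convex_Ioi 0) (f' := fun s => (a s)⁻¹ - s⁻¹)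
    (fun s hs => (hderiv s hs).continuousAt.continuousWithinAt) ?_ ?_ <;> rw [interior_Ioi]
  exacts [fun s hs => (hderiv s hs).hasDerivWithinAt,
    fun s hs => sub_nonneg.2 (inv_anti₀ (hpos s hs) (hle s hs))]

theorem surjOn_potential (ha : ContinuousOn a (Ioi 0)) (hpos : ∀ r > 0, 0 < a r)
    (hle : ∀ r > 0, a r ≤ r) : SurjOn (potential a) (Ioi 0) univ := by
  intro y _
  have hsub : uIcc 1 (Real.exp y) ⊆ Ioi 0 :=
    fun x hx => (lt_min one_pos (Real.exp_pos y)).trans_le hx.1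
  have hcont : ContinuousOn (potential a) (uIcc 1 (Real.exp y)) := fun x hx =>
    (hasDerivAt_potential ha hpos (hsub hx)).continuousAt.continuousWithinAt
  have hmono := monotoneOn_potential_sub_log ha hpos hle
  have hone : potential a 1 = 0 := integral_same
  have hy : y ∈ uIcc (potential a 1) (potential a (Real.exp y)) := by
    rw [hone, mem_uIcc]
    rcases le_total 0 y with hy | hy
    · have := hmono (mem_Ioi.2 one_pos) (Real.exp_pos y) (Real.one_le_exp hy)
      simp only [hone, Real.log_one, Real.log_exp] at this
      exact Or.inl ⟨hy, by linarith⟩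
    · have := hmono (Real.exp_pos y) (mem_Ioi.2 one_pos) (Real.exp_le_one_iff.2 hy)
      simp only [hone, Real.log_one, Real.log_exp] at this
      exact Or.inr ⟨by linarith, hy⟩
  obtain ⟨s, hs, hsy⟩ := intermediate_value_uIcc hcont hy
  exact ⟨s, hsub hs, hsy⟩

theorem hasDerivAt_invIoi_potential (ha : ContinuousOn a (Ioi 0)) (hpos : ∀ r > 0, 0 < a r)
    (hmono : StrictMonoOn (potential a) (Ioi 0))
    (hsurj : SurjOn (potential a) (Ioi 0) univ) (y : ℝ) :
    HasDerivAt (invIoi hmono hsurj) (a (invIoi hmono hsurj y)) y := by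
  simpa using hasDerivAt_invIoi hmono hsurj (fun s hs => hasDerivAt_potential ha hpos hs)
    (fun s hs => inv_ne_zero (hpos s hs).ne') y

end Potential

section Comparison

theorem sub_le_integral_of_ae_le {u u' φ : ℝ → ℝ}
    (hui : ∀ t ≥ (0:ℝ), IntervalIntegrable u' volume 0 t)
    (huu : ∀ t ≥ (0:ℝ), u t = u 0 + ∫ τ in (0:ℝ)..t, u' τ)
    (hub : ∀ᵐ t ∂volume, 0 ≤ t → u' t ≤ φ t) {x y : ℝ} (hx : 0 ≤ x) (hxy : x ≤ y)
    (hφ : IntervalIntegrable φ volume x y) : u y - u x ≤ ∫ τ in x..y, φ τ := by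
  have hy := hx.trans hxy
  have hxy_int : IntervalIntegrable u' volume x y := (hui x hx).symm.trans (hui y hy)
  have hinc : u y - u x = ∫ τ in x..y, u' τ := by
    rw [huu y hy, huu x hx, ← integral_add_adjacent_intervals (hui x hx) hxy_int]
    ring
  rw [hinc]
  refine integral_mono_ae_restrict hxy hxy_int hφ ?_
  filter_upwards [ae_restrict_of_ae hub, ae_restrict_mem measurableSet_Icc] with t ht htmem
  exact ht (hx.trans htmem.1)

theorem frequently_slope_lt_of_sub_le_integral {u φ : ℝ → ℝ} {x b r : ℝ} (hxb : x < b)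
    (hφ : ContinuousOn φ (Icc x b)) (hu : ∀ z ∈ Ioc x b, u z - u x ≤ ∫ τ in x..z, φ τ)
    (hr : φ x < r) : ∃ᶠ z in 𝓝[>] x, slope u x z < r := by
  have hnhds : Icc x b ∈ 𝓝[>] x := Icc_mem_nhdsGT hxb
  have hΦ : HasDerivWithinAt (fun z => ∫ τ in x..z, φ τ) (φ x) (Ioi x) x :=
    (integral_hasDerivWithinAt_right (s := Ici x) (t := Ioi x) IntervalIntegrable.refl
      ((hφ.stronglyMeasurableAtFilter_nhdsWithin measurableSet_Icc x).filter_mono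
        (nhdsWithin_le_of_mem hnhds))
      ((hφ x ⟨le_rfl, hxb.le⟩).mono_of_mem_nhdsWithin hnhds)).mono Ioi_subset_Ici_self
  have hslope := (hasDerivWithinAt_iff_tendsto_slope' (lt_irrefl x)).1 hΦ
  refine Eventually.frequently ?_
  filter_upwards [hslope.eventually (gt_mem_nhds hr), Ioc_mem_nhdsGT hxb] with z hz hzb
  refine lt_of_le_of_lt ?_ hz
  rw [slope_def_field, slope_def_field, integral_same, sub_zero]
  exact div_le_div_of_nonneg_right (hu z hzb) (sub_pos.2 hzb.1).le

theorem le_of_hasDerivAt_of_boundary {ρ u u' B B' : ℝ → ℝ} (hρ : ContinuousOn ρ (Ici 0))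
    (hu0 : ∀ t ≥ (0:ℝ), 0 ≤ u t)
    (hui : ∀ t ≥ (0:ℝ), IntervalIntegrable u' volume 0 t)
    (huu : ∀ t ≥ (0:ℝ), u t = u 0 + ∫ τ in (0:ℝ)..t, u' τ)
    (hub : ∀ᵐ t ∂volume, 0 ≤ t → u' t ≤ -ρ (u t))
    (hB : ∀ t, HasDerivAt B (B' t) t) (hB0 : u 0 ≤ B 0)
    (hbound : ∀ t ≥ (0:ℝ), u t = B t → -ρ (u t) < B' t) {T : ℝ} (hT : 0 ≤ T) :
    u T ≤ B T := by
  have hucont : ContinuousOn u (Icc 0 T) := by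
    have hprim := continuousOn_primitive_interval' (hui T hT) left_mem_uIcc
    rw [uIcc_of_le hT] at hprim
    exact (continuousOn_const.add hprim).congr fun x hx => huu x hx.1
  have hφ : ContinuousOn (fun τ => -ρ (u τ)) (Icc 0 T) :=
    (hρ.comp hucont fun x hx => hu0 x hx.1).neg
  refine image_le_of_liminf_slope_right_lt_deriv_boundary hucont (fun x hx r hr => ?_) hB0 hB
    (fun x hx => hbound x hx.1) ⟨hT, le_rfl⟩
  refine frequently_slope_lt_of_sub_le_integral hx.2 (hφ.mono (Icc_subset_Icc_left hx.1))
    (fun z hz => ?_) hr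
  refine sub_le_integral_of_ae_le hui huu hub hx.1 hz.1.le (hφ.mono ?_).intervalIntegrable
  rw [uIcc_of_le hz.1.le]
  exact Icc_subset_Icc hx.1 hz.2

theorem le_invIoi_potential_sub {ρ a u u' : ℝ → ℝ} (hρ : ContinuousOn ρ (Ici 0))
    (ha : ContinuousOn a (Ioi 0)) (hpos : ∀ r > 0, 0 < a r) (hlt : ∀ r > 0, a r < ρ r)
    (hmono : StrictMonoOn (potential a) (Ioi 0)) (hsurj : SurjOn (potential a) (Ioi 0) univ)
    (hu0 : ∀ t ≥ (0:ℝ), 0 ≤ u t)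
    (hui : ∀ t ≥ (0:ℝ), IntervalIntegrable u' volume 0 t)
    (huu : ∀ t ≥ (0:ℝ), u t = u 0 + ∫ τ in (0:ℝ)..t, u' τ)
    (hub : ∀ᵐ t ∂volume, 0 ≤ t → u' t ≤ -ρ (u t)) {s : ℝ} (hs : 0 < s) (hus : u 0 ≤ s)
    {t : ℝ} (ht : 0 ≤ t) : u t ≤ invIoi hmono hsurj (potential a s - t) := by
  have hB (τ : ℝ) : HasDerivAt (fun τ => invIoi hmono hsurj (potential a s - τ))
      (-a (invIoi hmono hsurj (potential a s - τ))) τ := by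
    simpa [Function.comp_def] using (hasDerivAt_invIoi_potential ha hpos hmono hsurj _).comp τ
      ((hasDerivAt_id' τ).const_sub _)
  refine le_of_hasDerivAt_of_boundary hρ hu0 hui huu hub hB
    (by rwa [sub_zero, invIoi_apply hmono hsurj hs]) (fun τ _ hτ => ?_) ht
  rw [hτ, neg_lt_neg_iff]
  exact hlt _ (invIoi_pos hmono hsurj _)

end Comparison

noncomputable def slowRate (ρ : ℝ → ℝ) (r : ℝ) : ℝ := min (ρ r) r / 2

theorem continuousOn_slowRate {ρ : ℝ → ℝ} (hρ : ContinuousOn ρ (Ici 0)) :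
    ContinuousOn (slowRate ρ) (Ioi 0) :=
  ((hρ.mono Ioi_subset_Ici_self).inf continuousOn_id).div_const 2

theorem slowRate_pos {ρ : ℝ → ℝ} (hρ : ∀ s > (0:ℝ), 0 < ρ s) {r : ℝ} (hr : 0 < r) :
    0 < slowRate ρ r :=
  half_pos (lt_min (hρ r hr) hr)

theorem slowRate_le_self (ρ : ℝ → ℝ) {r : ℝ} (hr : 0 < r) : slowRate ρ r ≤ r := by
  have := min_le_right (ρ r) r
  unfold slowRate
  linarith

theorem slowRate_lt {ρ : ℝ → ℝ} (hρ : ∀ s > (0:ℝ), 0 < ρ s) {r : ℝ} (hr : 0 < r) :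
    slowRate ρ r < ρ r := by
  have := min_le_left (ρ r) r
  have := hρ r hr
  unfold slowRate
  linarith

end KLComparison

open KLComparison in
theorem stmt14_general (ρ : ℝ → ℝ) (hρc : ContinuousOn ρ (Set.Ici 0))
    (hρpos : ∀ s > (0:ℝ), 0 < ρ s) :
    ∃ σ : ℝ → ℝ → ℝ, ClassKL σ ∧
      ∀ u u' : ℝ → ℝ,
        (∀ t ≥ (0:ℝ), 0 ≤ u t) →
        (∀ t ≥ (0:ℝ), IntervalIntegrable u' MeasureTheory.volume 0 t) →
        (∀ t ≥ (0:ℝ), u t = u 0 + ∫ τ in (0:ℝ)..t, u' τ) →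
        (∀ᵐ t ∂MeasureTheory.volume, 0 ≤ t → u' t ≤ -ρ (u t)) →
        ∀ t ≥ (0:ℝ), u t ≤ σ (u 0) t := by
  have ha := continuousOn_slowRate hρc
  have hpos (r : ℝ) (hr : r > 0) := slowRate_pos hρpos hr
  have hmono := strictMonoOn_potential ha hpos
  have hsurj := surjOn_potential ha hpos fun r hr => slowRate_le_self ρ hr
  refine ⟨klOf hmono hsurj, classKL_klOf hmono hsurj, fun u u' hu0 hui huu hub t ht => ?_⟩
  have hbarrier (s : ℝ) (hs : 0 < s) (hus : u 0 ≤ s) :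
      u t ≤ invIoi hmono hsurj (potential (slowRate ρ) s - t) :=
    le_invIoi_potential_sub hρc ha hpos (fun r hr => slowRate_lt hρpos hr) hmono hsurj
      hu0 hui huu hub hs hus ht
  rcases (hu0 0 le_rfl).lt_or_eq with hu0pos | hu0zero
  · rw [klOf_of_pos hmono hsurj hu0pos]
    exact hbarrier _ hu0pos le_rfl
  · rw [← hu0zero, klOf_of_nonpos hmono hsurj le_rfl]
    refine le_of_forall_pos_le_add fun δ hδ => ?_
    calc u t ≤ invIoi hmono hsurj (potential (slowRate ρ) δ - t) :=
          hbarrier δ hδ (hu0zero ▸ hδ.le)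
      _ ≤ δ := (invIoi_le_iff hmono hsurj hδ).2 (by linarith)
      _ = 0 + δ := (zero_add δ).symm

theorem stmt14 (ρ : ℝ → ℝ) (hρc : ContinuousOn ρ (Set.Ici 0)) (hρ0 : ρ 0 = 0)
    (hρpos : ∀ s > (0:ℝ), 0 < ρ s) (hρnn : ∀ s ≥ (0:ℝ), 0 ≤ ρ s)
    (hlip : ∃ K : NNReal, LipschitzOnWith K ρ (Set.Ici 0)) :
    ∃ σ : ℝ → ℝ → ℝ, ClassKL σ ∧
      ∀ u u' : ℝ → ℝ,
        (∀ t ≥ (0:ℝ), 0 ≤ u t) →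
        (∀ t ≥ (0:ℝ), IntervalIntegrable u' MeasureTheory.volume 0 t) →
        (∀ t ≥ (0:ℝ), u t = u 0 + ∫ τ in (0:ℝ)..t, u' τ) →
        (∀ᵐ t ∂MeasureTheory.volume, 0 ≤ t → u' t ≤ -ρ (u t)) →
        ∀ t ≥ (0:ℝ), u t ≤ σ (u 0) t :=
  stmt14_general ρ hρc hρpos
end
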